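/- (Proposition: every B-orbit closure in the regular semisimple zero fiber contains a point of the form (diag(r), diag(s'), 0, 0).) Let (r, s, i, j) ∈ 𝔟_n × 𝔟*_n × ℂ^n × (ℂ^n)* with r upper triangular having pairwise distinct diagonal entries, s lower triangular, and μ_B(r,s,i,j) = π([r,s] + ij) = 0. Then there exists a diagonal n×n complex matrix D such that the point (diag(r), D, 0, 0) lies in the closure, with respect to the standard (Euclidean) topology on 𝔟_n × 𝔟*_n × ℂ^n × (ℂ^n)*, of the B_n-orbit {(b r b^{−1}, π(b s b^{−1}), b i, j b^{−1}) : b ∈ B_n}. -/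

import Mathlib

/-- `M` is an upper triangular complex matrix. -/
def IsUT {n : ℕ} (M : Matrix (Fin n) (Fin n) ℂ) : Prop :=
  ∀ i j : Fin n, j < i → M i j = 0

/-- `M` is a lower triangular complex matrix (the chosen representatives of
`𝔟*ₙ = 𝔤𝔩ₙ/𝔫⁺`). -/
def IsLT {n : ℕ} (M : Matrix (Fin n) (Fin n) ℂ) : Prop :=
  ∀ i j : Fin n, i < j → M i j = 0

/-- The projection `π : 𝔤𝔩ₙ → 𝔟*ₙ` zeroing out all entries strictly above the
diagonal. -/
def lowProj {n : ℕ} (M : Matrix (Fin n) (Fin n) ℂ) : Matrix (Fin n) (Fin n) ℂ :=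
  Matrix.of fun i j => if j ≤ i then M i j else 0

/-!
Conjugating by the unitriangular matrix of eigenvectors of `r` (obtained by back substitution,
which needs the diagonal entries to be distinct) makes `r` diagonal, and by equivariance of the
moment map the new point `(diag d, s, i, j)` still lies in the zero fiber. There the moment map
equations read `i_a j_a = 0` and `(d_a - d_c) s_ac + i_a j_c = 0` for `a > c`. The torus element
with entry `t` where `j_a = 0` and `t⁻¹` elsewhere fixes `diag d` and the diagonal of `s`, and
multiplies each nonzero `i_a` and `j_c` by `t` and each nonzero `s_ac` (`a > c`) by `t²`;
letting `t → 0` gives the point.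
-/

open Matrix Filter Topology

variable {n : ℕ}

section Triangular

theorem isUT_iff_isUpperTriangular {M : Matrix (Fin n) (Fin n) ℂ} :
    IsUT M ↔ M.IsUpperTriangular :=
  ⟨fun h _ _ hij => h _ _ hij, fun h _ _ hij => h hij⟩

theorem IsUT.mul {A B : Matrix (Fin n) (Fin n) ℂ} (hA : IsUT A) (hB : IsUT B) : IsUT (A * B) :=
  isUT_iff_isUpperTriangular.2
    ((isUT_iff_isUpperTriangular.1 hA).mul (isUT_iff_isUpperTriangular.1 hB))

theorem IsUT.inv {A : Matrix (Fin n) (Fin n) ℂ} (hA : IsUT A) : IsUT A⁻¹ := by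
  by_cases h : IsUnit A.det
  · have := A.invertibleOfIsUnitDet h
    exact isUT_iff_isUpperTriangular.2
      (blockTriangular_inv_of_blockTriangular (isUT_iff_isUpperTriangular.1 hA))
  · rw [nonsing_inv_apply_not_isUnit A h]
    exact fun _ _ _ => rfl

theorem isUT_diagonal (d : Fin n → ℂ) : IsUT (diagonal d) :=
  fun _ _ h => diagonal_apply_ne _ h.ne'

theorem IsUT.sum_mul_eq {r : Matrix (Fin n) (Fin n) ℂ} (hr : IsUT r) (v : Fin n → ℂ) (a : Fin n) :
    ∑ c, r a c * v c = r a a * v a + ∑ c ∈ Finset.Ioi a, r a c * v c := by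
  rw [← Finset.sum_subset (Finset.subset_univ (Finset.Ici a))
    (fun c _ hc => by rw [hr a c (not_le.mp (by simpa using hc)), zero_mul]),
    ← Finset.Ioi_insert, Finset.sum_insert Finset.notMem_Ioi_self]

end Triangular

section LowProj

@[simp]
theorem lowProj_apply (M : Matrix (Fin n) (Fin n) ℂ) (a c : Fin n) :
    lowProj M a c = if c ≤ a then M a c else 0 := rfl

theorem lowProj_eq_zero_iff {M : Matrix (Fin n) (Fin n) ℂ} :
    lowProj M = 0 ↔ ∀ a c, c ≤ a → M a c = 0 := by
  refine ⟨fun h a c hca => ?_, fun h => ext fun a c => ?_⟩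
  · simpa [hca] using congrFun (congrFun h a) c
  · by_cases hca : c ≤ a <;> simp [hca, h]

theorem lowProj_add (M N : Matrix (Fin n) (Fin n) ℂ) :
    lowProj (M + N) = lowProj M + lowProj N := by
  ext a c; by_cases hca : c ≤ a <;> simp [hca]

theorem lowProj_sub (M N : Matrix (Fin n) (Fin n) ℂ) :
    lowProj (M - N) = lowProj M - lowProj N := by
  ext a c; by_cases hca : c ≤ a <;> simp [hca]

theorem isLT_lowProj (M : Matrix (Fin n) (Fin n) ℂ) : IsLT (lowProj M) :=
  fun _ _ h => by simp [not_le.2 h]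

theorem lowProj_mul_lowProj {A : Matrix (Fin n) (Fin n) ℂ} (hA : IsUT A)
    (M : Matrix (Fin n) (Fin n) ℂ) : lowProj (A * lowProj M) = lowProj (A * M) := by
  ext a c
  by_cases hca : c ≤ a
  · simp only [lowProj_apply, hca, if_true, mul_apply]
    refine Finset.sum_congr rfl fun p _ => ?_
    rcases lt_or_ge p a with hpa | hap
    · simp [hA a p hpa]
    · simp [hca.trans hap]
  · simp [hca]

theorem lowProj_lowProj_mul {B : Matrix (Fin n) (Fin n) ℂ} (hB : IsUT B)
    (M : Matrix (Fin n) (Fin n) ℂ) : lowProj (lowProj M * B) = lowProj (M * B) := by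
  ext a c
  by_cases hca : c ≤ a
  · simp only [lowProj_apply, hca, if_true, mul_apply]
    refine Finset.sum_congr rfl fun p _ => ?_
    rcases lt_or_ge c p with hcp | hpc
    · simp [hB p c hcp]
    · simp [hpc.trans hca]
  · simp [hca]

theorem lowProj_mul_lowProj_mul {A B : Matrix (Fin n) (Fin n) ℂ} (hA : IsUT A) (hB : IsUT B)
    (M : Matrix (Fin n) (Fin n) ℂ) : lowProj (A * lowProj M * B) = lowProj (A * M * B) := by
  rw [← lowProj_lowProj_mul hB, lowProj_mul_lowProj hA, lowProj_lowProj_mul hB]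

end LowProj

section Diagonalization

/-- Back substitution for an eigenvector of the upper triangular `r` with eigenvalue `r k k`,
normalised by `v k = 1` and `v a = 0` for `a > k`. -/
noncomputable def triEigvec (r : Matrix (Fin n) (Fin n) ℂ) (k a : Fin n) : ℂ :=
  if k ≤ a then (if a = k then 1 else 0)
  else -(∑ c ∈ (Finset.Ioi a).attach, r a c.1 * triEigvec r k c.1) / (r a a - r k k)
termination_by n - a.val
decreasing_by
  have : a < c.1 := Finset.mem_Ioi.mp c.2
  omega

variable (r : Matrix (Fin n) (Fin n) ℂ)

theorem triEigvec_self (k : Fin n) : triEigvec r k k = 1 := by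
  rw [triEigvec]; simp

theorem triEigvec_of_lt {k a : Fin n} (h : k < a) : triEigvec r k a = 0 := by
  rw [triEigvec, if_pos h.le, if_neg h.ne']

theorem triEigvec_of_gt {k a : Fin n} (h : a < k) :
    triEigvec r k a = -(∑ c ∈ Finset.Ioi a, r a c * triEigvec r k c) / (r a a - r k k) := by
  rw [triEigvec, if_neg (not_le.mpr h),
    Finset.sum_attach (Finset.Ioi a) (fun c => r a c * triEigvec r k c)]

variable {r}

theorem IsUT.sum_mul_triEigvec (hr : IsUT r) (hd : Function.Injective fun k => r k k)
    (k a : Fin n) : ∑ c, r a c * triEigvec r k c = r k k * triEigvec r k a := by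
  rw [hr.sum_mul_eq]
  rcases lt_or_ge a k with hak | hka
  · have hne : r a a - r k k ≠ 0 := sub_ne_zero.2 (hd.ne hak.ne)
    rw [triEigvec_of_gt r hak]
    field_simp
    ring
  · rw [Finset.sum_eq_zero fun c hc => by
      rw [triEigvec_of_lt r (hka.trans_lt (Finset.mem_Ioi.1 hc)), mul_zero], add_zero]
    rcases hka.eq_or_lt with rfl | hka
    · rfl
    · rw [triEigvec_of_lt r hka, mul_zero, mul_zero]

theorem IsUT.exists_conj_eq_diagonal (hr : IsUT r) (hd : Function.Injective fun k => r k k) :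
    ∃ b : Matrix (Fin n) (Fin n) ℂ, IsUT b ∧ IsUnit b.det ∧
      b * r * b⁻¹ = diagonal fun k => r k k := by
  set P : Matrix (Fin n) (Fin n) ℂ := of fun a k => triEigvec r k a
  have hP : IsUT P := fun a k hka => triEigvec_of_lt r hka
  have hPdet : IsUnit P.det := by
    rw [det_of_isUpperTriangular (isUT_iff_isUpperTriangular.1 hP)]
    simp [P, triEigvec_self]
  have hrP : r * P = P * diagonal fun k => r k k := by
    ext a k
    rw [mul_apply, mul_diagonal]
    exact (hr.sum_mul_triEigvec hd k a).trans (mul_comm _ _)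
  refine ⟨P⁻¹, hP.inv, P.isUnit_nonsing_inv_det hPdet, ?_⟩
  rw [P.nonsing_inv_nonsing_inv hPdet, Matrix.mul_assoc, hrP, ← Matrix.mul_assoc,
    P.nonsing_inv_mul hPdet, Matrix.one_mul]

end Diagonalization

section BorelAction

/-- A point `(r, s, i, j)` of `T*(𝔟ₙ × ℂⁿ)`; `s` stands for its class in `𝔟*ₙ`. -/
abbrev BorelDatum (n : ℕ) :=
  Matrix (Fin n) (Fin n) ℂ × Matrix (Fin n) (Fin n) ℂ × (Fin n → ℂ) × (Fin n → ℂ)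

noncomputable def borelAct (b : Matrix (Fin n) (Fin n) ℂ) (q : BorelDatum n) : BorelDatum n :=
  (b * q.1 * b⁻¹, lowProj (b * q.2.1 * b⁻¹), b *ᵥ q.2.2.1, q.2.2.2 ᵥ* b⁻¹)

def borelOrbit (q : BorelDatum n) : Set (BorelDatum n) :=
  {q' | ∃ b : Matrix (Fin n) (Fin n) ℂ, IsUT b ∧ IsUnit b.det ∧ q' = borelAct b q}

def momentMap (q : BorelDatum n) : Matrix (Fin n) (Fin n) ℂ :=
  lowProj (q.1 * q.2.1 - q.2.1 * q.1 + vecMulVec q.2.2.1 q.2.2.2)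

theorem borelAct_mul {b₁ : Matrix (Fin n) (Fin n) ℂ} (hb₁ : IsUT b₁)
    (b₀ : Matrix (Fin n) (Fin n) ℂ) (q : BorelDatum n) :
    borelAct (b₁ * b₀) q = borelAct b₁ (borelAct b₀ q) := by
  simp only [borelAct, lowProj_mul_lowProj_mul hb₁ hb₁.inv]
  simp only [Matrix.mul_inv_rev, mulVec_mulVec, vecMul_vecMul, Matrix.mul_assoc]

theorem borelOrbit_subset {q q' : BorelDatum n} (hq' : q' ∈ borelOrbit q) :
    borelOrbit q' ⊆ borelOrbit q := by
  rintro _ ⟨b₁, hb₁, hb₁det, rfl⟩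
  obtain ⟨b₀, hb₀, hb₀det, rfl⟩ := hq'
  refine ⟨b₁ * b₀, hb₁.mul hb₀, ?_, (borelAct_mul hb₁ b₀ q).symm⟩
  rw [det_mul]
  exact hb₁det.mul hb₀det

theorem momentMap_borelAct {b : Matrix (Fin n) (Fin n) ℂ} (hb : IsUT b) (hbdet : IsUnit b.det)
    {q : BorelDatum n} (hq : IsUT q.1) :
    momentMap (borelAct b q) = lowProj (b * momentMap q * b⁻¹) := by
  obtain ⟨r, s, i, j⟩ := q
  have hr' : IsUT (b * r * b⁻¹) := (hb.mul hq).mul hb.inv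
  have hconj : b * r * b⁻¹ * (b * s * b⁻¹) - b * s * b⁻¹ * (b * r * b⁻¹) +
      vecMulVec (b *ᵥ i) (j ᵥ* b⁻¹) = b * (r * s - s * r + vecMulVec i j) * b⁻¹ := by
    simp only [← vecMulVec_mul, ← mul_vecMulVec, Matrix.mul_add, Matrix.add_mul, Matrix.mul_sub,
      Matrix.sub_mul, Matrix.mul_assoc, nonsing_inv_mul_cancel_left _ _ hbdet]
  simp only [momentMap, borelAct]
  rw [lowProj_add, lowProj_sub, lowProj_mul_lowProj hr', lowProj_lowProj_mul hr', ← lowProj_sub,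
    ← lowProj_add, hconj, lowProj_mul_lowProj_mul hb hb.inv]

end BorelAction

section TorusLimit

theorem tendsto_zpow_mul_nhdsNE_zero {k : ℤ} {x : ℂ} (h : x ≠ 0 → 0 < k) :
    Tendsto (fun t : ℂ => t ^ k * x) (𝓝[≠] 0) (𝓝 0) := by
  by_cases hx : x = 0
  · simp [hx]
  lift k to ℕ using (h hx).le
  have hk : k ≠ 0 := by exact_mod_cast (h hx).ne'
  have hcont : Tendsto (fun t : ℂ => t ^ k * x) (𝓝 0) (𝓝 (0 ^ k * x)) :=
    ((continuous_pow k).mul continuous_const).tendsto 0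
  simpa [zero_pow hk] using hcont.mono_left nhdsWithin_le_nhds

variable {d : Fin n → ℂ} {s : Matrix (Fin n) (Fin n) ℂ} {i j : Fin n → ℂ}

theorem momentMap_diagonal_apply (a c : Fin n) :
    momentMap (diagonal d, s, i, j) a c =
      if c ≤ a then (d a - d c) * s a c + i a * j c else 0 := by
  simp only [momentMap, lowProj_apply, Matrix.add_apply, Matrix.sub_apply, diagonal_mul,
    mul_diagonal, vecMulVec_apply, sub_mul, mul_comm (s a c)]

theorem borelAct_diagonal_zpow (w : Fin n → ℤ) {t : ℂ} (ht : t ≠ 0) (hs : IsLT s) :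
    borelAct (diagonal fun a => t ^ w a) (diagonal d, s, i, j) =
      (diagonal d, of fun a c => t ^ (w a - w c) * s a c,
        fun a => t ^ w a * i a, fun c => t ^ (-w c) * j c) := by
  have hinv : (diagonal fun a => t ^ w a)⁻¹ = diagonal fun a => t ^ (-w a) := by
    refine inv_eq_right_inv ?_
    rw [diagonal_mul_diagonal, ← diagonal_one]
    congr 1
    ext a
    rw [_root_.zpow_neg, mul_inv_cancel₀ (zpow_ne_zero _ ht)]
  simp only [borelAct, hinv, Prod.mk.injEq]
  refine ⟨?_, ?_, ?_, ?_⟩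
  · rw [diagonal_mul_diagonal, diagonal_mul_diagonal]
    congr 1
    ext a
    rw [_root_.zpow_neg]
    field_simp
  · ext a c
    simp only [lowProj_apply, diagonal_mul, mul_diagonal, of_apply]
    split_ifs with hca
    · rw [zpow_sub₀ ht, _root_.zpow_neg]
      ring
    · rw [hs a c (not_le.1 hca), mul_zero]
  · ext a
    rw [mulVec_diagonal]
  · ext c
    rw [vecMul_diagonal, mul_comm]

/-- Exponents of the cocharacter `t ↦ diagonal (t ^ torusWeight j ·)`: as `t → 0` it contracts
`i`, `j` and, by the moment map equations, every nonzero off-diagonal entry of `s`. -/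
noncomputable def torusWeight (j : Fin n → ℂ) (a : Fin n) : ℤ := if j a = 0 then 1 else -1

section MomentZero

variable (hμ : momentMap (diagonal d, s, i, j) = 0)
include hμ

theorem momentMap_diagonal_eq_zero_apply {a c : Fin n} (hca : c ≤ a) :
    (d a - d c) * s a c + i a * j c = 0 := by
  simpa [momentMap_diagonal_apply, hca] using congrFun (congrFun hμ a) c

theorem torusWeight_pos {a : Fin n} (ha : i a ≠ 0) : 0 < torusWeight j a := by
  have hja : j a = 0 := by simpa [ha] using momentMap_diagonal_eq_zero_apply hμ (le_refl a)
  simp [torusWeight, hja]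

theorem torusWeight_sub_pos (hd : Function.Injective d) (hs : IsLT s) {a c : Fin n} (hac : a ≠ c)
    (hsac : s a c ≠ 0) : 0 < torusWeight j a - torusWeight j c := by
  have hca : c < a := (lt_or_gt_of_ne hac).resolve_left fun h => hsac (hs a c h)
  have hij : i a * j c ≠ 0 := by
    have h := momentMap_diagonal_eq_zero_apply hμ hca.le
    have : (d a - d c) * s a c ≠ 0 := mul_ne_zero (sub_ne_zero.2 (hd.ne hac)) hsac
    exact fun h0 => this (by simpa [h0] using h)
  have hja : j a = 0 := by
    simpa [left_ne_zero_of_mul hij] using momentMap_diagonal_eq_zero_apply hμ (le_refl a)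
  simp [torusWeight, hja, right_ne_zero_of_mul hij]

end MomentZero

theorem diagonal_mem_closure_borelOrbit (hd : Function.Injective d) (hs : IsLT s)
    (hμ : momentMap (diagonal d, s, i, j) = 0) :
    (diagonal d, diagonal (fun a => s a a), 0, 0) ∈
      closure (borelOrbit (diagonal d, s, i, j)) := by
  set w := torusWeight j
  set γ : ℂ → BorelDatum n := fun t => borelAct (diagonal fun a => t ^ w a) (diagonal d, s, i, j)
  have hmem : ∀ᶠ t in 𝓝[≠] 0, γ t ∈ borelOrbit (diagonal d, s, i, j) :=
    eventually_mem_nhdsWithin.mono fun t ht => ⟨_, isUT_diagonal _, by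
      rw [det_diagonal]
      exact isUnit_iff_ne_zero.2 (Finset.prod_ne_zero_iff.2 fun a _ => zpow_ne_zero _ ht), rfl⟩
  have hlim : Tendsto γ (𝓝[≠] 0) (𝓝 (diagonal d, diagonal (fun a => s a a), 0, 0)) := by
    refine Tendsto.congr' (eventually_mem_nhdsWithin.mono
      fun t ht => (borelAct_diagonal_zpow w ht hs).symm) ?_
    refine tendsto_const_nhds.prodMk_nhds (Tendsto.prodMk_nhds ?_ (Tendsto.prodMk_nhds ?_ ?_))
    · refine tendsto_pi_nhds.2 fun a => tendsto_pi_nhds.2 fun c => ?_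
      rcases eq_or_ne a c with rfl | hac
      · simp
      · rw [diagonal_apply_ne _ hac]
        exact tendsto_zpow_mul_nhdsNE_zero (torusWeight_sub_pos hμ hd hs hac)
    · exact tendsto_pi_nhds.2 fun a => tendsto_zpow_mul_nhdsNE_zero (torusWeight_pos hμ)
    · refine tendsto_pi_nhds.2 fun c => tendsto_zpow_mul_nhdsNE_zero fun hc => ?_
      simp [w, torusWeight, hc]
  exact mem_closure_of_tendsto hlim hmem

end TorusLimit

theorem rss_orbit_closure_contains_diagonal_point_general
    (n : ℕ)
    (r s : Matrix (Fin n) (Fin n) ℂ) (i j : Fin n → ℂ)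
    (hr : IsUT r)
    (hdist : ∀ a c : Fin n, a ≠ c → r a a ≠ r c c)
    (hmoment : ∀ a c : Fin n, c ≤ a →
      (r * s - s * r + Matrix.vecMulVec i j) a c = 0) :
    ∃ d : Fin n → ℂ,
      (Matrix.diagonal (fun k => r k k), Matrix.diagonal d,
          (0 : Fin n → ℂ), (0 : Fin n → ℂ)) ∈
        closure {q : Matrix (Fin n) (Fin n) ℂ × Matrix (Fin n) (Fin n) ℂ ×
            (Fin n → ℂ) × (Fin n → ℂ) |
          ∃ b : Matrix (Fin n) (Fin n) ℂ, IsUT b ∧ IsUnit b.det ∧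
            q = (b * r * b⁻¹, lowProj (b * s * b⁻¹), Matrix.mulVec b i,
              Matrix.vecMul j b⁻¹)} := by
  have hd : Function.Injective fun k => r k k := fun a c h => by_contra fun hac => hdist a c hac h
  obtain ⟨b, hb, hbdet, hbr⟩ := hr.exists_conj_eq_diagonal hd
  have hq : borelAct b (r, s, i, j) =
      (diagonal fun k => r k k, lowProj (b * s * b⁻¹), b *ᵥ i, j ᵥ* b⁻¹) := by
    simp only [borelAct, hbr]
  have hμ : momentMap (borelAct b (r, s, i, j)) = 0 := by
    have hμ₀ : momentMap (r, s, i, j) = 0 := lowProj_eq_zero_iff.2 hmoment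
    rw [momentMap_borelAct hb hbdet hr, hμ₀, Matrix.mul_zero, Matrix.zero_mul]
    exact lowProj_eq_zero_iff.2 fun _ _ _ => rfl
  refine ⟨fun a => lowProj (b * s * b⁻¹) a a, ?_⟩
  change _ ∈ closure (borelOrbit (r, s, i, j))
  refine closure_mono (borelOrbit_subset ⟨b, hb, hbdet, rfl⟩) ?_
  rw [hq] at hμ ⊢
  exact diagonal_mem_closure_borelOrbit hd (isLT_lowProj _) hμ

/-- Every `B`-orbit in the regular semisimple zero fiber of the moment map
`μ_B(r,s,i,j) = π([r,s] + ij)` contains, in the closure of its `Bₙ`-orbit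
`{(b r b⁻¹, π(b s b⁻¹), b i, j b⁻¹) : b ∈ Bₙ}` (Euclidean topology), a point of the
form `(diag(r), D, 0, 0)` with `D` diagonal. -/
theorem rss_orbit_closure_contains_diagonal_point
    (n : ℕ) (hn : 1 ≤ n)
    (r s : Matrix (Fin n) (Fin n) ℂ) (i j : Fin n → ℂ)
    (hr : IsUT r)
    (hdist : ∀ a c : Fin n, a ≠ c → r a a ≠ r c c)
    (hs : IsLT s)
    (hmoment : ∀ a c : Fin n, c ≤ a →
      (r * s - s * r + Matrix.vecMulVec i j) a c = 0) :
    ∃ d : Fin n → ℂ,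
      (Matrix.diagonal (fun k => r k k), Matrix.diagonal d,
          (0 : Fin n → ℂ), (0 : Fin n → ℂ)) ∈
        closure {q : Matrix (Fin n) (Fin n) ℂ × Matrix (Fin n) (Fin n) ℂ ×
            (Fin n → ℂ) × (Fin n → ℂ) |
          ∃ b : Matrix (Fin n) (Fin n) ℂ, IsUT b ∧ IsUnit b.det ∧
            q = (b * r * b⁻¹, lowProj (b * s * b⁻¹), Matrix.mulVec b i,
              Matrix.vecMul j b⁻¹)} :=
  rss_orbit_closure_contains_diagonal_point_general n r s i j hr hdist hmoment
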